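/- For non-integer $k \in \frac{1}{2}\mathbb{Z}$ and $y > 0$: $y^{-k/2} M_{k/2, (1-k)/2}(y) = (-1)^{k-1}(1-k) e^{-y/2}\left(\Gamma(1-k) - \Gamma(1-k, -y)\right)$, where $(-1)^{k-1} = e^{\pi i(k-1)}$ via the principal branch, $M_{\mu,\nu}$ is the Whittaker M-function, $\Gamma$ is the gamma function, and $\Gamma(1-k,-y)$ is the incomplete gamma function continued to negative real argument. -/

import Mathlib

/-!
With `s = 1 - k`, the Whittaker function in question is `e^{-y/2} y^{1-k/2} ₁F₁(s; s + 1; y)`, and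
`(s)_n / (s + 1)_n = s / (s + n)` turns `₁F₁(s; s + 1; y)` into `s ∑ yⁿ / (n! (s + n))`, the series
of `γ(s, -y) = (-y)^s ∑ yⁿ / (n! (s + n))`. For `y > 0` the principal branch gives
`(-y)^s = y^s e^{πis}`, and `(-1)^{k-1} = e^{πi(k-1)}` cancels this phase. Since `k` is not an
integer, `s + n` never vanishes.
-/

open Complex

/-- The Pochhammer symbol `(a)_n = a(a+1)⋯(a+n-1)`. -/
noncomputable def poch (a : ℝ) (n : ℕ) : ℝ := ∏ i ∈ Finset.range n, (a + i)

/-- Kummer's confluent hypergeometric function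
`₁F₁(a; b; y) = ∑_{n≥0} (a)_n/(b)_n · yⁿ/n!`. -/
noncomputable def kummerM (a b y : ℝ) : ℝ :=
  ∑' n : ℕ, (poch a n / poch b n) * y ^ n / (n.factorial : ℝ)

/-- The Whittaker M-function
`M_{μ,ν}(y) = e^{-y/2} y^{ν+1/2} ₁F₁(ν-μ+1/2; 1+2ν; y)`. -/
noncomputable def whittakerM (μ ν y : ℝ) : ℝ :=
  Real.exp (-y / 2) * y ^ (ν + 1 / 2 : ℝ) * kummerM (ν - μ + 1 / 2) (1 + 2 * ν) y

/-- The lower incomplete gamma function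
`γ(s, w) = w^s ∑_{n≥0} (-w)^n / (n! (s+n))`, for complex `w`
(with `w^s` via the principal branch). -/
noncomputable def lowerGammaC (s : ℝ) (w : ℂ) : ℂ :=
  w ^ (s : ℂ) * ∑' n : ℕ, (-w) ^ n / ((n.factorial : ℂ) * ((s : ℂ) + n))

/-- The upper incomplete gamma function continued to negative real argument:
`Γ(s, -y) = Γ(s) - γ(s, -y)`. -/
noncomputable def incGammaNeg (s y : ℝ) : ℂ :=
  (Real.Gamma s : ℂ) - lowerGammaC s (-(y : ℂ))

lemma poch_mul_add (s : ℝ) (n : ℕ) : poch s n * (s + n) = s * poch (s + 1) n := by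
  induction n with
  | zero => simp [poch]
  | succ n ih =>
    simp only [poch, Finset.prod_range_succ] at ih ⊢
    push_cast
    linear_combination (s + 1 + n) * ih

lemma poch_add_one_ne_zero {s : ℝ} (hs : ∀ n : ℕ, s + n ≠ 0) (n : ℕ) : poch (s + 1) n ≠ 0 :=
  Finset.prod_ne_zero_iff.2 fun i _ => by convert hs (i + 1) using 1; push_cast; ring

lemma kummerM_self_add_one {s : ℝ} (hs : ∀ n : ℕ, s + n ≠ 0) (y : ℝ) :
    kummerM s (s + 1) y = s * ∑' n : ℕ, y ^ n / (n.factorial * (s + n)) := by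
  rw [kummerM, ← tsum_mul_left]
  refine tsum_congr fun n => ?_
  have hratio : poch s n / poch (s + 1) n = s / (s + n) := by
    rw [div_eq_div_iff (poch_add_one_ne_zero hs n) (hs n), poch_mul_add]
  rw [hratio]
  field_simp

lemma rpow_neg_half_mul_whittakerM {y : ℝ} (hy : 0 < y) (k : ℝ) :
    y ^ (-(k / 2) : ℝ) * whittakerM (k / 2) ((1 - k) / 2) y =
      Real.exp (-y / 2) * y ^ (1 - k) * kummerM (1 - k) (1 - k + 1) y := by
  have hpow : y ^ (-(k / 2) : ℝ) * y ^ ((1 - k) / 2 + 1 / 2 : ℝ) = y ^ (1 - k) := by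
    rw [← Real.rpow_add hy]
    ring_nf
  rw [whittakerM, ← hpow]
  ring_nf

lemma lowerGammaC_neg_ofReal (s : ℝ) {y : ℝ} (hy : 0 ≤ y) :
    lowerGammaC s (-(y : ℂ)) = ((y ^ s : ℝ) : ℂ) * Complex.exp (Real.pi * I * s) *
      ((∑' n : ℕ, y ^ n / (n.factorial * (s + n)) : ℝ) : ℂ) := by
  have hcpow : (-(y : ℂ)) ^ (s : ℂ) = ((y ^ s : ℝ) : ℂ) * Complex.exp (Real.pi * I * s) := by
    simpa [Complex.ofReal_cpow hy] using
      Complex.ofReal_cpow_of_nonpos (x := -y) (by linarith) (s : ℂ)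
  rw [lowerGammaC, hcpow, Complex.ofReal_tsum]
  push_cast
  simp only [neg_neg]

lemma neg_one_cpow_sub_one_mul_exp (k : ℂ) :
    (-1 : ℂ) ^ (k - 1) * Complex.exp (Real.pi * I * (1 - k)) = 1 := by
  rw [Complex.cpow_def_of_ne_zero (by norm_num), Complex.log_neg_one, ← Complex.exp_add,
    ← Complex.exp_zero]
  ring_nf

lemma one_sub_half_odd_add_natCast_ne_zero {j : ℤ} (hj : Odd j) (n : ℕ) :
    1 - (j : ℝ) / 2 + n ≠ 0 := by
  intro h
  have hj_eq : j = 2 * (1 + n) := by exact_mod_cast (by linarith : (j : ℝ) = 2 * (1 + n))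
  exact Int.not_even_iff_odd.mpr hj ⟨1 + n, by omega⟩

/-- For non-integral half-integers `k` and `y > 0`:
`y^{-k/2} M_{k/2,(1-k)/2}(y) = (-1)^{k-1}(1-k) e^{-y/2} (Γ(1-k) - Γ(1-k,-y))`,
with `(-1)^{k-1} = e^{πi(k-1)}` via the principal branch. -/
theorem whittakerM_second_special_value (k : ℝ)
    (hk : ∃ j : ℤ, Odd j ∧ k = (j : ℝ) / 2) (y : ℝ) (hy : 0 < y) :
    ((y ^ (-(k / 2) : ℝ) * whittakerM (k / 2) ((1 - k) / 2) y : ℝ) : ℂ) =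
      (-1 : ℂ) ^ ((k : ℂ) - 1) * ((1 - k : ℝ) : ℂ) *
        (Real.exp (-y / 2) : ℂ) *
        ((Real.Gamma (1 - k) : ℂ) - incGammaNeg (1 - k) y) := by
  have hs : ∀ n : ℕ, 1 - k + n ≠ 0 := by
    obtain ⟨j, hj, rfl⟩ := hk
    exact one_sub_half_odd_add_natCast_ne_zero hj
  rw [rpow_neg_half_mul_whittakerM hy, kummerM_self_add_one hs, incGammaNeg, sub_sub_cancel,
    lowerGammaC_neg_ofReal _ hy.le]
  generalize ∑' n : ℕ, y ^ n / (n.factorial * (1 - k + n)) = S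
  generalize Real.exp (-y / 2) = E
  generalize y ^ (1 - k) = P
  have hphase := neg_one_cpow_sub_one_mul_exp k
  push_cast at hphase ⊢
  linear_combination -((1 - (k : ℂ)) * E * P * S) * hphase
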